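/- Every quasi-coherent sheaf over a presheaf of groupoids (X₀, X₁) on affine schemes is a sheaf in the fpqc (flat) topology: for every point (R, y) of X₀ and every finite family {R → S_i} of flat ring maps with ∏ S_i faithfully flat over R, the diagram M_y → ∏ M_{y_i} ⇉ ∏ M_{y_{jk}} is an equalizer of R-modules. -/

import Mathlib

set_option maxHeartbeats 1000000

universe u

open TensorProduct

/-- A presheaf of groupoids on `Aff`, the opposite of the category of commutative rings (of a
fixed universe): a functorial assignment of a (small) groupoid to every commutative ring. -/
structure PGpd : Type (u + 1) where
  Ob : ∀ (R : Type u) [CommRing R], Type u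
  Hom : ∀ {R : Type u} [CommRing R], Ob R → Ob R → Type u
  gid : ∀ {R : Type u} [CommRing R] (x : Ob R), Hom x x
  gcomp : ∀ {R : Type u} [CommRing R] {x y z : Ob R}, Hom x y → Hom y z → Hom x z
  ginv : ∀ {R : Type u} [CommRing R] {x y : Ob R}, Hom x y → Hom y x
  id_gcomp : ∀ {R : Type u} [CommRing R] {x y : Ob R} (α : Hom x y), gcomp (gid x) α = α
  gcomp_id : ∀ {R : Type u} [CommRing R] {x y : Ob R} (α : Hom x y), gcomp α (gid y) = α
  gcomp_assoc : ∀ {R : Type u} [CommRing R] {x y z w : Ob R} (α : Hom x y) (β : Hom y z)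
    (γ : Hom z w), gcomp (gcomp α β) γ = gcomp α (gcomp β γ)
  ginv_gcomp : ∀ {R : Type u} [CommRing R] {x y : Ob R} (α : Hom x y),
    gcomp (ginv α) α = gid y
  gcomp_ginv : ∀ {R : Type u} [CommRing R] {x y : Ob R} (α : Hom x y),
    gcomp α (ginv α) = gid x
  mapOb : ∀ {R S : Type u} [CommRing R] [CommRing S], (R →+* S) → Ob R → Ob S
  mapHom : ∀ {R S : Type u} [CommRing R] [CommRing S] (f : R →+* S) {x y : Ob R},
    Hom x y → Hom (mapOb f x) (mapOb f y)
  mapOb_id : ∀ {R : Type u} [CommRing R] (x : Ob R), mapOb (RingHom.id R) x = x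
  mapOb_comp : ∀ {R S T : Type u} [CommRing R] [CommRing S] [CommRing T]
    (f : R →+* S) (g : S →+* T) (x : Ob R), mapOb (g.comp f) x = mapOb g (mapOb f x)
  mapHom_id : ∀ {R : Type u} [CommRing R] {x y : Ob R} (α : Hom x y),
    HEq (mapHom (RingHom.id R) α) α
  mapHom_comp : ∀ {R S T : Type u} [CommRing R] [CommRing S] [CommRing T]
    (f : R →+* S) (g : S →+* T) {x y : Ob R} (α : Hom x y),
    HEq (mapHom (g.comp f) α) (mapHom g (mapHom f α))
  mapHom_gid : ∀ {R S : Type u} [CommRing R] [CommRing S] (f : R →+* S) (x : Ob R),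
    mapHom f (gid x) = gid (mapOb f x)
  mapHom_gcomp : ∀ {R S : Type u} [CommRing R] [CommRing S] (f : R →+* S) {x y z : Ob R}
    (α : Hom x y) (β : Hom y z), mapHom f (gcomp α β) = gcomp (mapHom f α) (mapHom f β)

/-- A morphism of presheaves of groupoids. -/
structure PGpdHom (X Y : PGpd.{u}) : Type (u + 1) where
  onOb : ∀ {R : Type u} [CommRing R], X.Ob R → Y.Ob R
  onHom : ∀ {R : Type u} [CommRing R] {x y : X.Ob R}, X.Hom x y → Y.Hom (onOb x) (onOb y)
  onOb_map : ∀ {R S : Type u} [CommRing R] [CommRing S] (f : R →+* S) (x : X.Ob R),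
    onOb (X.mapOb f x) = Y.mapOb f (onOb x)
  onHom_map : ∀ {R S : Type u} [CommRing R] [CommRing S] (f : R →+* S) {x y : X.Ob R}
    (α : X.Hom x y), HEq (onHom (X.mapHom f α)) (Y.mapHom f (onHom α))
  onHom_gid : ∀ {R : Type u} [CommRing R] (x : X.Ob R), onHom (X.gid x) = Y.gid (onOb x)
  onHom_gcomp : ∀ {R : Type u} [CommRing R] {x y z : X.Ob R} (α : X.Hom x y) (β : X.Hom y z),
    onHom (X.gcomp α β) = Y.gcomp (onHom α) (onHom β)

/-- A cover of a commutative ring `R`: a family of `R`-algebras, i.e. ring maps out of `R`. -/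
structure RingCover (R : Type u) [CommRing R] : Type (u + 1) where
  ι : Type u
  S : ι → CommRingCat.{u}
  f : ∀ i, R →+* S i

variable {R : Type u} [CommRing R]

/-- The "intersection" `S j ⊗[R] S k` of two members of a cover. -/
def RingCover.pair (c : RingCover R) (j k : c.ι) : Type u :=
  letI := (c.f j).toAlgebra
  letI := (c.f k).toAlgebra
  (c.S j) ⊗[R] (c.S k)

noncomputable instance (c : RingCover R) (j k : c.ι) : CommRing (c.pair j k) :=
  @Algebra.TensorProduct.instCommRing R (c.S j) (c.S k) _ _ (c.f j).toAlgebra _ (c.f k).toAlgebra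

/-- The map `S j → S j ⊗[R] S k`. -/
noncomputable def RingCover.pleft (c : RingCover R) (j k : c.ι) : c.S j →+* c.pair j k :=
  letI := (c.f j).toAlgebra
  letI := (c.f k).toAlgebra
  Algebra.TensorProduct.includeLeftRingHom

/-- The map `S k → S j ⊗[R] S k`. -/
noncomputable def RingCover.pright (c : RingCover R) (j k : c.ι) : c.S k →+* c.pair j k :=
  letI := (c.f j).toAlgebra
  letI := (c.f k).toAlgebra
  (Algebra.TensorProduct.includeRight : ↥(c.S k) →ₐ[R] (c.S j) ⊗[R] (c.S k)).toRingHom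


/-- An fpqc cover: a finite family of flat ring maps `{R → S i}` such that `∏ S i` is
faithfully flat over `R`. -/
def RingCover.fpqc {R : Type u} [CommRing R] (c : RingCover R) : Prop :=
  Nonempty (Fintype c.ι) ∧
  (∀ i, @Module.Flat R (c.S i) _ _ ((c.f i).toAlgebra.toModule)) ∧
  @Module.FaithfullyFlat R (∀ i, c.S i) _ _ ((Pi.ringHom c.f).toAlgebra.toModule)

/-- The base change `S ⊗[R] P` of an `R`-module `P` along a ring map `f : R → S`. -/
def Tens {R S : Type u} [CommRing R] [CommRing S] (f : R →+* S) (P : Type u)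
    [AddCommGroup P] [Module R P] : Type u :=
  letI := f.toAlgebra
  S ⊗[R] P

/-- The adjoint `S ⊗[R] P → Q` of an `f`-semilinear map `t : P → Q`,
`s ⊗ p ↦ s • t p`. -/
noncomputable def adjMap {R S : Type u} [CommRing R] [CommRing S] (f : R →+* S)
    {P Q : Type u} [AddCommGroup P] [Module R P] [AddCommGroup Q] [Module S Q]
    (t : P → Q) (h_add : ∀ m m', t (m + m') = t m + t m')
    (h_smul : ∀ (r : R) (m : P), t (r • m) = f r • t m) :
    Tens f P → Q := by
  letI := f.toAlgebra
  letI : Module R Q := Module.compHom Q f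
  refine fun z => TensorProduct.lift (LinearMap.mk₂ R (fun s p => s • t p)
    ?_ ?_ ?_ ?_) z
  · intro s s' p
    show (s + s') • t p = s • t p + s' • t p
    rw [add_smul]
  · intro r s p
    show (r • s) • t p = f r • (s • t p)
    rw [Algebra.smul_def, mul_smul]
    rfl
  · intro s p p'
    show s • t (p + p') = s • t p + s • t p'
    rw [h_add, smul_add]
  · intro c s p
    show s • t (c • p) = f c • (s • t p)
    rw [h_smul, smul_comm]

/-- A quasi-coherent sheaf over a presheaf of groupoids `(X₀, X₁)` on `Aff`: an `R`-module
`M x` for every point `(R, x)` of `X₀`, functorial restriction maps `θ` whose adjoints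
`S ⊗[R] M x → M y` are isomorphisms (the quasi-coherence condition), together with cocycle
isomorphisms `ψ α` for the morphisms of `X₁`, natural and compatible with composition. -/
structure QCSheaf (X : PGpd.{u}) : Type (u + 2) where
  M : ∀ {R : Type u} [CommRing R], X.Ob R → ModuleCat.{u} R
  θ : ∀ {R S : Type u} [CommRing R] [CommRing S] (f : R →+* S) (x : X.Ob R) (y : X.Ob S),
    X.mapOb f x = y → M x → M y
  θ_add : ∀ {R S : Type u} [CommRing R] [CommRing S] (f : R →+* S) (x : X.Ob R) (y : X.Ob S)
    (h : X.mapOb f x = y) (m m' : M x), θ f x y h (m + m') = θ f x y h m + θ f x y h m'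
  θ_smul : ∀ {R S : Type u} [CommRing R] [CommRing S] (f : R →+* S) (x : X.Ob R) (y : X.Ob S)
    (h : X.mapOb f x = y) (r : R) (m : M x), θ f x y h (r • m) = f r • θ f x y h m
  θ_id : ∀ {R : Type u} [CommRing R] (x : X.Ob R) (h : X.mapOb (RingHom.id R) x = x)
    (m : M x), θ (RingHom.id R) x x h m = m
  θ_comp : ∀ {R S T' : Type u} [CommRing R] [CommRing S] [CommRing T'] (f : R →+* S)
    (g : S →+* T') (x : X.Ob R) (y : X.Ob S) (z : X.Ob T') (h1 : X.mapOb f x = y)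
    (h2 : X.mapOb g y = z) (h3 : X.mapOb (g.comp f) x = z) (m : M x),
    θ g y z h2 (θ f x y h1 m) = θ (g.comp f) x z h3 m
  qc : ∀ {R S : Type u} [CommRing R] [CommRing S] (f : R →+* S) (x : X.Ob R) (y : X.Ob S)
    (h : X.mapOb f x = y),
    Function.Bijective (adjMap f (θ f x y h) (θ_add f x y h) (θ_smul f x y h))
  ψ : ∀ {R : Type u} [CommRing R] {x y : X.Ob R}, X.Hom x y → M x → M y
  ψ_add : ∀ {R : Type u} [CommRing R] {x y : X.Ob R} (α : X.Hom x y) (m m' : M x),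
    ψ α (m + m') = ψ α m + ψ α m'
  ψ_smul : ∀ {R : Type u} [CommRing R] {x y : X.Ob R} (α : X.Hom x y) (r : R) (m : M x),
    ψ α (r • m) = r • ψ α m
  ψ_gid : ∀ {R : Type u} [CommRing R] (x : X.Ob R) (m : M x), ψ (X.gid x) m = m
  ψ_gcomp : ∀ {R : Type u} [CommRing R] {x y z : X.Ob R} (α : X.Hom x y) (β : X.Hom y z)
    (m : M x), ψ (X.gcomp α β) m = ψ β (ψ α m)
  ψ_natural : ∀ {R S : Type u} [CommRing R] [CommRing S] (f : R →+* S) {x y : X.Ob R}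
    (α : X.Hom x y) (x' y' : X.Ob S) (hx : X.mapOb f x = x') (hy : X.mapOb f y = y')
    (β : X.Hom x' y'), HEq (X.mapHom f α) β →
    ∀ m : M x, θ f y y' hy (ψ α m) = ψ β (θ f x x' hx m)

/-! Quasi-coherence identifies `M (y i)` with `S i ⊗[R] M y` and the two restrictions to
`S j ⊗[R] S k` with the two base changes along `includeLeft` and `includeRight`, so the claim is
faithfully flat descent for the single module `N = M y` along `A = ∏ S i`. The Amitsur complex
`N → A ⊗ N → (A ⊗ A) ⊗ N` is exact: after base change along `A` it has the contracting homotopy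
induced by `a ⊗ b ↦ a * b`, and a faithfully flat base change reflects exactness. Since the
family is finite, tensor products commute with `∏`, which splits this complex into the families
indexed by the `S i` and by the pairs `S j ⊗[R] S k`. -/

theorem LinearMap.exact_of_homotopy {R M N P : Type*} [Ring R] [AddCommGroup M]
    [AddCommGroup N] [AddCommGroup P] [Module R M] [Module R N] [Module R P]
    {f : M →ₗ[R] N} {g : N →ₗ[R] P} (h₀ : N →ₗ[R] M) (h₁ : P →ₗ[R] N) (hgf : g ∘ₗ f = 0)
    (hh : f ∘ₗ h₀ - h₁ ∘ₗ g = LinearMap.id) : Function.Exact f g :=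
  exact_of_comp_of_mem_range hgf fun x hx => ⟨h₀ x, by simpa [hx] using congr($hh x)⟩

theorem TensorProduct.piLeft_tmul (R N : Type*) [CommSemiring R] [AddCommMonoid N] [Module R N]
    {ι : Type*} [Fintype ι] [DecidableEq ι] (M : ι → Type*) [∀ i, AddCommMonoid (M i)]
    [∀ i, Module R (M i)] (m : ∀ i, M i) (n : N) :
    piLeft R N M (m ⊗ₜ n) = fun i => m i ⊗ₜ n := by
  ext i
  simp

namespace Module.FaithfullyFlat

open Algebra.TensorProduct (includeLeft includeRight includeLeftSubRight)

variable (R : Type*) [CommRing R] (A : Type*) [CommRing A] [Algebra R A]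
  (N : Type*) [AddCommGroup N] [Module R N]

theorem exact_mk_one_rTensor_includeLeftSubRight [FaithfullyFlat R A] :
    Function.Exact (TensorProduct.mk R A N 1) ((includeLeftSubRight R A).rTensor N) := by
  let μ (X : Type _) [AddCommGroup X] [Module A X] [Module R X] [IsScalarTower R A X] :
      A ⊗[R] X →ₗ[R] X := (LinearMap.id.liftBaseChange A).restrictScalars R
  refine lTensor_reflects_exact R A _ _ <| LinearMap.exact_of_homotopy (μ (A ⊗[R] N))
    (μ (A ⊗[R] (A ⊗[R] N)) ∘ₗ (TensorProduct.assoc R A A N).toLinearMap.lTensor A) ?_ ?_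
  · have : (includeLeftSubRight R A).rTensor N ∘ₗ TensorProduct.mk R A N 1 = 0 :=
      LinearMap.ext fun n => by simp
    rw [← LinearMap.lTensor_comp, this, LinearMap.lTensor_zero]
  · ext a b n
    simp [μ, sub_tmul, smul_tmul', smul_sub]

section Pi

variable {R N} {ι : Type*} [Finite ι] (S : ι → Type*) [∀ i, CommRing (S i)]
  [∀ i, Algebra R (S i)] [FaithfullyFlat R (∀ i, S i)]

theorem injective_pi_one_tmul :
    Function.Injective fun (n : N) (i : ι) => (1 : S i) ⊗ₜ[R] n := by
  classical
  have := Fintype.ofFinite ι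
  intro n n' h
  apply tensorProduct_mk_injective (A := R) (B := ∀ i, S i) N
  apply (piLeft R N S).injective
  simpa only [TensorProduct.mk_apply, piLeft_tmul, Pi.one_apply] using h

theorem exists_one_tmul_eq_of_rTensor_includeLeft_eq (u : ∀ i, S i ⊗[R] N)
    (hu : ∀ j k, (includeLeft : S j →ₐ[R] S j ⊗[R] S k).toLinearMap.rTensor N (u j) =
      (includeRight : S k →ₐ[R] S j ⊗[R] S k).toLinearMap.rTensor N (u k)) :
    ∃ n : N, ∀ i, (1 : S i) ⊗ₜ[R] n = u i := by
  classical
  have := Fintype.ofFinite ι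
  let Φ : ((∀ i, S i) ⊗[R] (∀ i, S i)) ⊗[R] N ≃ₗ[R] ∀ j k, (S j ⊗[R] S k) ⊗[R] N :=
    TensorProduct.congr (piLeft R _ S ≪≫ₗ .piCongrRight fun j => piRight R R (S j) S)
      (.refl R N) ≪≫ₗ piLeft R N _ ≪≫ₗ .piCongrRight fun j => piLeft R N _
  have hΦ : ∀ V j k, Φ ((includeLeftSubRight R _).rTensor N V) j k =
      (includeLeft : S j →ₐ[R] S j ⊗[R] S k).toLinearMap.rTensor N (piLeft R N S V j) -
        (includeRight : S k →ₐ[R] S j ⊗[R] S k).toLinearMap.rTensor N (piLeft R N S V k) := by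
    intro V j k
    induction V using TensorProduct.induction_on with
    | zero => simp
    | tmul a n => simp [Φ, sub_tmul]
    | add V W hV hW => simp only [map_add, Pi.add_apply, hV, hW]; abel
  set U := (piLeft R N S).symm u
  have hU : piLeft R N S U = u := (piLeft R N S).apply_symm_apply u
  have hdU : (includeLeftSubRight R _).rTensor N U = 0 :=
    Φ.injective <| funext fun j => funext fun k => by rw [hΦ, hU, hu, sub_self, map_zero]; rfl
  obtain ⟨n, hn⟩ := (exact_mk_one_rTensor_includeLeftSubRight R (∀ i, S i) N U).mp hdU
  refine ⟨n, fun i => ?_⟩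
  rw [← hU, ← hn, TensorProduct.mk_apply, piLeft_tmul]
  rfl

end Pi

end Module.FaithfullyFlat

namespace Tens

variable {R S : Type u} [CommRing R] [CommRing S] (f : R →+* S) (P : Type u) [AddCommGroup P]
  [Module R P]

noncomputable instance : AddCommGroup (Tens f P) :=
  letI := f.toAlgebra
  (inferInstance : AddCommGroup (S ⊗[R] P))

noncomputable instance : Module R (Tens f P) :=
  letI := f.toAlgebra
  (inferInstance : Module R (S ⊗[R] P))

variable {P} in
noncomputable def tmul (s : S) (p : P) : Tens f P :=
  letI := f.toAlgebra
  s ⊗ₜ[R] p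

/-- `f.toAlgebra` agrees with an algebra structure with structure map `f` only propositionally,
so `Tens f P` and `S ⊗[R] P` are different types. -/
noncomputable def equivOfToAlgebraEq [inst : Algebra R S] (hf : f.toAlgebra = inst) :
    Tens f P ≃ₗ[R] S ⊗[R] P := by
  subst hf
  exact LinearEquiv.refl R _

theorem equivOfToAlgebraEq_symm_tmul [inst : Algebra R S] (hf : f.toAlgebra = inst) (s : S)
    (p : P) : (equivOfToAlgebraEq f P hf).symm (s ⊗ₜ p) = tmul f s p := by
  subst hf
  rfl

end Tens

section adjMap

variable {R S : Type u} [CommRing R] [CommRing S] (f : R →+* S) {P Q : Type u} [AddCommGroup P]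
  [Module R P] [AddCommGroup Q] [Module S Q] (t : P → Q)
  (h_add : ∀ m m', t (m + m') = t m + t m') (h_smul : ∀ (r : R) (m : P), t (r • m) = f r • t m)

theorem adjMap_tmul (s : S) (p : P) : adjMap f t h_add h_smul (Tens.tmul f s p) = s • t p :=
  rfl

theorem adjMap_add (x y : Tens f P) :
    adjMap f t h_add h_smul (x + y) = adjMap f t h_add h_smul x + adjMap f t h_add h_smul y :=
  map_add _ x y

end adjMap

namespace QCSheaf

variable {X : PGpd.{u}} (M : QCSheaf X) {R S T : Type u} [CommRing R] [CommRing S] [CommRing T]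

theorem θ_zero (f : R →+* S) (x : X.Ob R) (y : X.Ob S) (h : X.mapOb f x = y) :
    M.θ f x y h 0 = 0 := by
  have h0 := M.θ_add f x y h 0 0
  rw [add_zero] at h0
  exact left_eq_add.mp h0

theorem θ_congr {f f' : R →+* S} (hf : f = f') (x : X.Ob R) (y : X.Ob S) (h : X.mapOb f x = y)
    (h' : X.mapOb f' x = y) : M.θ f x y h = M.θ f' x y h' := by
  subst hf
  rfl

variable [Algebra R S] [Algebra R T]

noncomputable def adjoint (y : X.Ob R) (x : X.Ob S) (hx : X.mapOb (algebraMap R S) y = x) :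
    S ⊗[R] M.M y → M.M x :=
  adjMap _ (M.θ _ y x hx) (M.θ_add _ y x hx) (M.θ_smul _ y x hx) ∘
    (Tens.equivOfToAlgebraEq (algebraMap R S) (M.M y)
      (Algebra.algebra_ext _ ‹Algebra R S› fun _ => rfl)).symm

variable (y : X.Ob R) {x : X.Ob S} {x' : X.Ob T} (hx : X.mapOb (algebraMap R S) y = x)

theorem adjoint_tmul (s : S) (m : M.M y) : M.adjoint y x hx (s ⊗ₜ m) = s • M.θ _ y x hx m := by
  simp only [adjoint, Function.comp_apply, Tens.equivOfToAlgebraEq_symm_tmul, adjMap_tmul]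

theorem adjoint_add (u u' : S ⊗[R] M.M y) :
    M.adjoint y x hx (u + u') = M.adjoint y x hx u + M.adjoint y x hx u' := by
  simp only [adjoint, Function.comp_apply, map_add, adjMap_add]

theorem adjoint_zero : M.adjoint y x hx 0 = 0 := by
  simpa using M.adjoint_add y hx 0 0

theorem adjoint_bijective : Function.Bijective (M.adjoint y x hx) :=
  (M.qc _ y x hx).comp (LinearEquiv.bijective _)

theorem θ_adjoint (φ : S →ₐ[R] T) {w : X.Ob T} (hφ : X.mapOb φ x = w)
    (hw : X.mapOb (algebraMap R T) y = w) (u : S ⊗[R] M.M y) :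
    M.θ φ x w hφ (M.adjoint y x hx u) = M.adjoint y w hw (φ.toLinearMap.rTensor _ u) := by
  induction u using TensorProduct.induction_on with
  | zero => rw [M.adjoint_zero, M.θ_zero, map_zero, M.adjoint_zero]
  | tmul s m =>
    rw [M.adjoint_tmul, M.θ_smul, M.θ_comp _ _ _ _ _ hx hφ (by rwa [φ.comp_algebraMap]),
      LinearMap.rTensor_tmul, M.adjoint_tmul, M.θ_congr φ.comp_algebraMap]
    rfl
  | add u u' hu hu' => rw [M.adjoint_add, M.θ_add, hu, hu', map_add, M.adjoint_add]

open Algebra.TensorProduct (includeLeftRingHom includeLeft includeRight) in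
theorem rTensor_includeLeft_eq_of_θ_eq (hx' : X.mapOb (algebraMap R T) y = x')
    (u : S ⊗[R] M.M y) (u' : T ⊗[R] M.M y)
    (h : ∀ (w : X.Ob (S ⊗[R] T)) (hw : X.mapOb includeLeftRingHom x = w)
      (hw' : X.mapOb (includeRight : T →ₐ[R] S ⊗[R] T).toRingHom x' = w),
      M.θ _ x w hw (M.adjoint y x hx u) = M.θ _ x' w hw' (M.adjoint y x' hx' u')) :
    (includeLeft : S →ₐ[R] S ⊗[R] T).toLinearMap.rTensor (M.M y) u =
      (includeRight : T →ₐ[R] S ⊗[R] T).toLinearMap.rTensor (M.M y) u' := by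
  let w := X.mapOb (algebraMap R (S ⊗[R] T)) y
  have hL : X.mapOb ((includeLeft : S →ₐ[R] S ⊗[R] T) : S →+* S ⊗[R] T) x = w := by
    rw [← hx, ← X.mapOb_comp, AlgHom.comp_algebraMap]
  have hR : X.mapOb ((includeRight : T →ₐ[R] S ⊗[R] T) : T →+* S ⊗[R] T) x' = w := by
    rw [← hx', ← X.mapOb_comp, AlgHom.comp_algebraMap]
  refine (M.adjoint_bijective y (x := w) rfl).injective ?_
  rw [← M.θ_adjoint y hx _ hL, ← M.θ_adjoint y hx' _ hR]
  exact h _ hL hR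

end QCSheaf

theorem quasi_coherent_is_fpqc_sheaf (X : PGpd.{u}) (M : QCSheaf X)
    (R : Type u) [CommRing R] (c : RingCover R) (hc : c.fpqc) (y : X.Ob R) :
    (∀ m m' : M.M y,
      (∀ i, M.θ (c.f i) y (X.mapOb (c.f i) y) rfl m =
        M.θ (c.f i) y (X.mapOb (c.f i) y) rfl m') →
      m = m') ∧
    (∀ v : ∀ i, M.M (X.mapOb (c.f i) y),
      (∀ (j k : c.ι) (w : X.Ob (c.pair j k))
        (hj : X.mapOb (c.pleft j k) (X.mapOb (c.f j) y) = w)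
        (hk : X.mapOb (c.pright j k) (X.mapOb (c.f k) y) = w),
        M.θ (c.pleft j k) (X.mapOb (c.f j) y) w hj (v j) =
          M.θ (c.pright j k) (X.mapOb (c.f k) y) w hk (v k)) →
      ∃ m : M.M y, ∀ i, M.θ (c.f i) y (X.mapOb (c.f i) y) rfl m = v i) := by
  obtain ⟨⟨_⟩, -, hff⟩ := hc
  let instAlgebra (i : c.ι) : Algebra R (c.S i) := (c.f i).toAlgebra
  have : Module.FaithfullyFlat R (∀ i, c.S i) := hff
  have θ_eq_adjoint (i : c.ι) (m : M.M y) :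
      M.θ (c.f i) y _ rfl m = M.adjoint y (X.mapOb (c.f i) y) rfl ((1 : c.S i) ⊗ₜ m) := by
    rw [M.adjoint_tmul, one_smul]
    rfl
  refine ⟨fun m m' h => Module.FaithfullyFlat.injective_pi_one_tmul (fun i => c.S i) <|
    funext fun i => (M.adjoint_bijective y rfl).injective ?_, fun v hv => ?_⟩
  · exact (θ_eq_adjoint i m).symm.trans ((h i).trans (θ_eq_adjoint i m'))
  choose u hu using fun i => (M.adjoint_bijective y (x := X.mapOb (c.f i) y) rfl).surjective (v i)
  obtain rfl : (fun i => M.adjoint y _ rfl (u i)) = v := funext hu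
  obtain ⟨n, hn⟩ := Module.FaithfullyFlat.exists_one_tmul_eq_of_rTensor_includeLeft_eq _ u
    fun j k => M.rTensor_includeLeft_eq_of_θ_eq y rfl rfl (u j) (u k) (hv j k)
  exact ⟨n, fun i => by rw [θ_eq_adjoint, hn]; rfl⟩
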